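/- Let π ∈ ℤ⁴ with 0 ≤ π₁ ≤ π₂ ≤ π₃ ≤ π₄ and η ∈ ℤ satisfy π₄ ≤ η, π₁ + π₂ ≤ η, and π₁ + π₃ ≥ η + 1. Then {x ∈ [0,1]⁴ : η < πᵀx < η + 1} is contained in the union of {x ∈ [0,1]⁴ : 1 < x₁ + x₂ + x₃ + x₄ < 2} and {x ∈ [0,1]⁴ : 0 < x₃ + x₄ < 1}. -/

import Mathlib

/-!
Write `v = π₁x₁ + π₂x₂ + π₃x₃ + π₄x₄`, `s = x₁ + x₂ + x₃ + x₄` and `t = x₃ + x₄`.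
If `t = 0` then `v ≤ π₁ + π₂ ≤ η`. If `t ≥ 1`, then `s ≤ 1` forces `v ≤ π₄ s ≤ η`, while `s ≥ 2`
forces `v ≥ π₁ s + (π₃ - π₁) t ≥ π₁ + π₃ ≥ η + 1`. So whenever `η < v < η + 1`, either `0 < t < 1`
or `1 < s < 2`.
-/

section WeightedSum

variable {R : Type*} [CommRing R] [LinearOrder R] [IsStrictOrderedRing R]

theorem weighted_sum_le_mul_sum {a₁ a₂ a₃ a₄ x₁ x₂ x₃ x₄ : R} (h₁ : a₁ ≤ a₄) (h₂ : a₂ ≤ a₄)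
    (h₃ : a₃ ≤ a₄) (hx₁ : 0 ≤ x₁) (hx₂ : 0 ≤ x₂) (hx₃ : 0 ≤ x₃) :
    a₁ * x₁ + a₂ * x₂ + a₃ * x₃ + a₄ * x₄ ≤ a₄ * (x₁ + x₂ + x₃ + x₄) := by
  have := mul_le_mul_of_nonneg_right h₁ hx₁
  have := mul_le_mul_of_nonneg_right h₂ hx₂
  have := mul_le_mul_of_nonneg_right h₃ hx₃
  linarith

theorem pairwise_weighted_sum_le {a₁ a₂ a₃ a₄ x₁ x₂ x₃ x₄ : R} (h₁₂ : a₁ ≤ a₂) (h₃₄ : a₃ ≤ a₄)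
    (hx₂ : 0 ≤ x₂) (hx₄ : 0 ≤ x₄) :
    a₁ * (x₁ + x₂) + a₃ * (x₃ + x₄) ≤ a₁ * x₁ + a₂ * x₂ + a₃ * x₃ + a₄ * x₄ := by
  have := mul_le_mul_of_nonneg_right h₁₂ hx₂
  have := mul_le_mul_of_nonneg_right h₃₄ hx₄
  linarith

end WeightedSum

theorem stmt_17 (π₁ π₂ π₃ π₄ η : ℤ) (h0 : 0 ≤ π₁) (h12 : π₁ ≤ π₂) (h23 : π₂ ≤ π₃)
    (h34 : π₃ ≤ π₄) (h4 : π₄ ≤ η) (h12η : π₁ + π₂ ≤ η) (h13 : η + 1 ≤ π₁ + π₃) :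
    ∀ x₁ x₂ x₃ x₄ : ℝ, 0 ≤ x₁ → x₁ ≤ 1 → 0 ≤ x₂ → x₂ ≤ 1 → 0 ≤ x₃ → x₃ ≤ 1 →
      0 ≤ x₄ → x₄ ≤ 1 →
      (η : ℝ) < π₁ * x₁ + π₂ * x₂ + π₃ * x₃ + π₄ * x₄ →
      π₁ * x₁ + π₂ * x₂ + π₃ * x₃ + π₄ * x₄ < (η : ℝ) + 1 →
      ((1 < x₁ + x₂ + x₃ + x₄ ∧ x₁ + x₂ + x₃ + x₄ < 2) ∨
        (0 < x₃ + x₄ ∧ x₃ + x₄ < 1)) := by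
  intro x₁ x₂ x₃ x₄ hx₁ hx₁' hx₂ hx₂' hx₃ hx₃' hx₄ hx₄' hlo hhi
  rify at h0 h12 h23 h34 h4 h12η h13
  rcases le_or_gt (x₃ + x₄) 0 with ht | ht
  · obtain rfl : x₃ = 0 := by linarith
    obtain rfl : x₄ = 0 := by linarith
    have := mul_le_of_le_one_right (h0.trans h12) hx₂'
    have := mul_le_of_le_one_right h0 hx₁'
    linarith
  rcases lt_or_ge (x₃ + x₄) 1 with ht' | ht'
  · exact Or.inr ⟨ht, ht'⟩
  refine Or.inl ⟨?_, ?_⟩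
  · by_contra! hs
    have hv := weighted_sum_le_mul_sum (x₄ := x₄) (h12.trans (h23.trans h34)) (h23.trans h34) h34
      hx₁ hx₂ hx₃
    have := mul_le_of_le_one_right (h0.trans (h12.trans (h23.trans h34))) hs
    linarith
  · by_contra! hs
    have hv := pairwise_weighted_sum_le (x₁ := x₁) (x₃ := x₃) h12 h34 hx₂ hx₄
    have := mul_le_mul_of_nonneg_left hs h0
    have := mul_le_mul_of_nonneg_left ht' (sub_nonneg.mpr (h12.trans h23))
    linarith
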